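/- Let ~ and ≡ be two equivalence relations on {1,...,m} such that each ~-class has size at most w and ≡ has exactly l classes. Then the number of pairs (p,q) with 1 ≤ p < q ≤ m, p ~ q, and p ≢ q is at most (w/m) times the number of pairs (p,q) with 1 ≤ p < q ≤ m and p ≢ q. -/

import Mathlib

/-!
Both sides count unordered pairs, so it suffices to count ordered ones. Group the ordered pairs
`(p, q)` with `p ~ q`, `p ≢ q` by the `≡`-class `C` of `p` and the common `~`-class `K`. With
`x K = |K ∩ C|` and `y K = |K \ C|`, the bound for `C` reads
`(∑ (x K + y K)) * ∑ x K * y K ≤ w * (∑ x K) * (∑ y K)` given `x K + y K ≤ w`, and after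
symmetrising the double sum over `(K, K')` it is a four-variable inequality for each pair.
-/

open Finset

theorem add_mul_mul_add_add_mul_mul_le {x y x' y' w : ℕ} (h : x + y ≤ w) (h' : x' + y' ≤ w) :
    (x' + y') * (x * y) + (x + y) * (x' * y') ≤ w * (x * y' + x' * y) := by
  have hsplit : (x' + y') * (x * y) + (x + y) * (x' * y') =
      x * y' * (x' + y) + x' * y * (x + y') := by ring
  rw [hsplit]
  -- If one bracket exceeds `w`, its coefficient is the smaller one, and the brackets sum to `≤ 2w`.
  rcases le_total x x' with hx | hx <;> rcases le_total y y' with hy | hy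
  · nlinarith [Nat.zero_le (x * y'), Nat.zero_le (x' * y)]
  · have : x * y' ≤ x' * y := Nat.mul_le_mul hx hy
    nlinarith [Nat.zero_le (x * y'), Nat.zero_le (x' * y)]
  · have : x' * y ≤ x * y' := Nat.mul_le_mul hx hy
    nlinarith [Nat.zero_le (x * y'), Nat.zero_le (x' * y)]
  · nlinarith [Nat.zero_le (x * y'), Nat.zero_le (x' * y)]

theorem sum_add_mul_sum_mul_le {ι : Type*} (s : Finset ι) (x y : ι → ℕ) {w : ℕ}
    (h : ∀ i ∈ s, x i + y i ≤ w) :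
    (∑ i ∈ s, (x i + y i)) * ∑ i ∈ s, x i * y i ≤ w * ((∑ i ∈ s, x i) * ∑ i ∈ s, y i) := by
  have hpair := sum_le_sum fun i hi => sum_le_sum fun j hj =>
    add_mul_mul_add_add_mul_mul_le (h i hi) (h j hj)
  simp only [sum_add_distrib, ← mul_sum, ← sum_mul, mul_add] at hpair
  rw [sum_add_distrib]
  linarith

variable {α κ ι : Type*} [Fintype α]

theorem card_filter_prod_eq_sum (P : α × α → Prop) [DecidablePred P] :
    #{pq | P pq} = ∑ p, #{q | P (p, q)} := by
  simp only [card_filter, Fintype.sum_prod_type]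

theorem card_filter_eq_two_mul_card_filter_lt [LinearOrder α] (P : α → α → Prop) [DecidableRel P]
    (hsymm : ∀ p q, P p q → P q p) (hirr : ∀ p, ¬ P p p) :
    #{pq : α × α | P pq.1 pq.2} = 2 * #{pq : α × α | pq.1 < pq.2 ∧ P pq.1 pq.2} := by
  set u : Finset (α × α) := {pq | pq.1 < pq.2 ∧ P pq.1 pq.2}
  set v : Finset (α × α) := {pq | pq.2 < pq.1 ∧ P pq.1 pq.2}
  have disj : Disjoint u v := by grind [disjoint_left]
  have union : u.disjUnion v disj = ({pq | P pq.1 pq.2} : Finset (α × α)) := by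
    ext pq
    simp only [u, v, mem_disjUnion, mem_filter_univ]
    grind
  have swap : #u = #v := card_equiv (Equiv.prodComm α α) (by grind)
  rw [← union, card_disjUnion, ← swap, two_mul]

section Kernels

variable [Fintype κ] [DecidableEq κ] [DecidableEq ι] (f : α → κ) (g : α → ι)

theorem card_filter_apply_ne_eq_sum [Fintype ι] :
    #{pq : α × α | g pq.1 ≠ g pq.2} = ∑ c, #{p | g p = c} * #{q | g q ≠ c} := by
  rw [card_filter_prod_eq_sum, ← sum_fiberwise univ g]
  refine sum_congr rfl fun c _ => sum_const_nat fun p hp => ?_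
  simp only [(mem_filter_univ p).1 hp, ne_comm]

theorem card_filter_apply_eq_and_ne_eq_sum [Fintype ι] :
    #{pq : α × α | f pq.1 = f pq.2 ∧ g pq.1 ≠ g pq.2} =
      ∑ c, ∑ k, #{p ∈ {p | g p = c} | f p = k} * #{q ∈ {q | g q ≠ c} | f q = k} := by
  rw [card_filter_prod_eq_sum, ← sum_fiberwise univ g]
  refine sum_congr rfl fun c _ => ?_
  rw [← sum_fiberwise _ f]
  refine sum_congr rfl fun k _ => sum_const_nat fun p hp => ?_
  obtain ⟨hgp, hfp⟩ := mem_filter.1 hp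
  simp only [(mem_filter_univ p).1 hgp, hfp, filter_filter, eq_comm, ne_comm, and_comm]

variable {f} {w : ℕ}

theorem card_mul_sum_card_fiber_mul_le (hf : ∀ k, #{p | f p = k} ≤ w) (c : ι) :
    Fintype.card α * ∑ k, #{p ∈ {p | g p = c} | f p = k} * #{q ∈ {q | g q ≠ c} | f q = k} ≤
      w * (#{p | g p = c} * #{q | g q ≠ c}) := by
  have hsum (s : Finset α) : #s = ∑ k, #{p ∈ s | f p = k} :=
    card_eq_sum_card_fiberwise fun _ _ => mem_univ _
  have hfiber (k : κ) : #{p ∈ {p | g p = c} | f p = k} + #{q ∈ {q | g q ≠ c} | f q = k} =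
      #{p | f p = k} := by
    rw [filter_comm, filter_comm (p := fun q => g q ≠ c)]
    exact card_filter_add_card_filter_not _
  calc Fintype.card α * ∑ k, #{p ∈ {p | g p = c} | f p = k} * #{q ∈ {q | g q ≠ c} | f q = k}
      = (∑ k, (#{p ∈ {p | g p = c} | f p = k} + #{q ∈ {q | g q ≠ c} | f q = k})) *
          ∑ k, #{p ∈ {p | g p = c} | f p = k} * #{q ∈ {q | g q ≠ c} | f q = k} := by
        rw [← card_univ, hsum univ]
        simp only [hfiber]
    _ ≤ w * ((∑ k, #{p ∈ {p | g p = c} | f p = k}) * ∑ k, #{q ∈ {q | g q ≠ c} | f q = k}) :=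
        sum_add_mul_sum_mul_le _ _ _ fun k _ => (hfiber k).trans_le (hf k)
    _ = w * (#{p | g p = c} * #{q | g q ≠ c}) := by rw [← hsum, ← hsum]

theorem card_mul_card_filter_apply_eq_and_ne_le [Fintype ι] (hf : ∀ k, #{p | f p = k} ≤ w) :
    Fintype.card α * #{pq : α × α | f pq.1 = f pq.2 ∧ g pq.1 ≠ g pq.2} ≤
      w * #{pq : α × α | g pq.1 ≠ g pq.2} := by
  rw [card_filter_apply_eq_and_ne_eq_sum, card_filter_apply_ne_eq_sum, mul_sum, mul_sum]
  exact sum_le_sum fun c _ => card_mul_sum_card_fiber_mul_le g hf c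

end Kernels

theorem Equivalence.filter_univ_eq_filter_univ_iff {r : α → α → Prop} [DecidableRel r]
    (hr : Equivalence r) {p p' : α} : univ.filter (r p) = univ.filter (r p') ↔ r p p' := by
  refine ⟨fun h => ?_, fun h => ?_⟩
  · simpa using (Finset.ext_iff.1 h p').2 (by simpa using hr.refl p')
  · ext q
    simp only [mem_filter_univ]
    exact ⟨hr.trans (hr.symm h), hr.trans h⟩

theorem sum_orbits_eclasses2_bound_general (m w : ℕ)
    (R E : Fin m → Fin m → Prop) [DecidableRel R] [DecidableRel E]
    (hR : Equivalence R) (hE : Equivalence E)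
    (hclass : ∀ p : Fin m, (Finset.univ.filter (fun q => R p q)).card ≤ w) :
    m * (Finset.univ.filter (fun pq : Fin m × Fin m =>
          pq.1 < pq.2 ∧ R pq.1 pq.2 ∧ ¬ E pq.1 pq.2)).card
      ≤ w * (Finset.univ.filter (fun pq : Fin m × Fin m =>
          pq.1 < pq.2 ∧ ¬ E pq.1 pq.2)).card := by
  have hfiber (k : Finset (Fin m)) : #{p | univ.filter (R p) = k} ≤ w := by
    rcases (univ.filter fun p => univ.filter (R p) = k).eq_empty_or_nonempty with hempty | ⟨p, hp⟩
    · simp [hempty]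
    · obtain rfl := (mem_filter_univ p).1 hp
      convert hclass p using 2
      ext q
      simp only [mem_filter_univ, hR.filter_univ_eq_filter_univ_iff]
      exact ⟨hR.symm, hR.symm⟩
  have key := card_mul_card_filter_apply_eq_and_ne_le (fun p => univ.filter (E p)) hfiber
  simp only [hR.filter_univ_eq_filter_univ_iff, ne_eq, hE.filter_univ_eq_filter_univ_iff,
    Fintype.card_fin] at key
  have hH := card_filter_eq_two_mul_card_filter_lt (fun p q => R p q ∧ ¬E p q)
    (fun p q h => ⟨hR.symm h.1, fun h' => h.2 (hE.symm h')⟩) (fun p h => h.2 (hE.refl p))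
  have hN := card_filter_eq_two_mul_card_filter_lt (fun p q => ¬E p q)
    (fun p q h h' => h (hE.symm h')) (fun p h => h (hE.refl p))
  rw [hH, hN] at key
  linarith

/-- Lemma (eclasses2), inequality part: for equivalence relations `R` (classes of size
at most `w`) and `E` (with `l` classes) on `Fin m`, the number of pairs `p < q` with
`R p q` and `¬ E p q` is at most `w/m` times the number of pairs `p < q` with `¬ E p q`. -/
theorem sum_orbits_eclasses2_bound (m w l : ℕ) (hm : 0 < m) (hw : 0 < w)
    (R E : Fin m → Fin m → Prop) [DecidableRel R] [DecidableRel E]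
    (hR : Equivalence R) (hE : Equivalence E)
    (hclass : ∀ p : Fin m, (Finset.univ.filter (fun q => R p q)).card ≤ w)
    (hl : (Finset.univ.image (fun p : Fin m => Finset.univ.filter (fun q => E p q))).card = l) :
    m * (Finset.univ.filter (fun pq : Fin m × Fin m =>
          pq.1 < pq.2 ∧ R pq.1 pq.2 ∧ ¬ E pq.1 pq.2)).card
      ≤ w * (Finset.univ.filter (fun pq : Fin m × Fin m =>
          pq.1 < pq.2 ∧ ¬ E pq.1 pq.2)).card :=
  sum_orbits_eclasses2_bound_general m w R E hR hE hclass
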